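/- (Proposition 2, vector case) Let X be a discrete random vector with finite support 𝒳, and for each nonempty proper subset α ⊆ 𝒳 let A_⟨α⟩ be the binary partition variable (A_⟨α⟩ = α iff X ∈ α), with A_⟨x⟩ denoting the indicator of the singleton {x}. Suppose A_⟨β⟩ is a binary partition variable such that: (1) for any γ ⊆ α, H(A_⟨β⟩ | A_⟨x⟩, x ∈ γ) = 0 if and only if γ = α; and (2) for any γ ⊆ α^c, H(A_⟨β⟩ | A_⟨x⟩, x ∈ γ) = 0 if and only if γ = α^c. Then A_⟨β⟩ = A_⟨α⟩ (i.e., ⟨β⟩ = ⟨α⟩). -/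

import Mathlib

open MeasureTheory Real

/-- Shannon entropy of a finitely-valued random variable `X` under measure `μ`. -/
noncomputable def entropy {Ω : Type*} [MeasurableSpace Ω] (μ : Measure Ω)
    {S : Type*} [Fintype S] (X : Ω → S) : ℝ :=
  ∑ s : S, Real.negMulLog ((μ (X ⁻¹' {s})).toReal)

/-- Conditional Shannon entropy `H(X | Y) = H(X, Y) - H(Y)`. -/
noncomputable def condEntropy {Ω : Type*} [MeasurableSpace Ω] (μ : Measure Ω)
    {S T : Type*} [Fintype S] [Fintype T] (X : Ω → S) (Y : Ω → T) : ℝ :=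
  entropy μ (fun ω => (X ω, Y ω)) - entropy μ Y

/-- Binary entropy function with the convention `0 log 0 = 0`. -/
noncomputable def binEnt (p : ℝ) : ℝ :=
  Real.negMulLog p + Real.negMulLog (1 - p)

/-- Binary partition random variable `A_⟨α⟩` induced by `X` and the set `α`:
it records on which side of the partition `{α, αᶜ}` the value of `X` lies. -/
def part {Ω S : Type*} [DecidableEq S] (X : Ω → S) (α : Finset S) : Ω → Bool :=
  fun ω => decide (X ω ∈ α)

/-!
Conditioning on the singleton indicators `A_⟨x⟩, x ∈ γ`, reveals `X` except on the atom
`X ∈ γᶜ`, so `H(A_⟨β⟩ | A_⟨x⟩, x ∈ γ) = h(P(γᶜ ∩ β)) + h(P(γᶜ ∖ β)) - h(P(γᶜ))` with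
`h = negMulLog`. Under full support this vanishes only if `γᶜ` lies on one side of `β`, or in a
degenerate case where both sides have (outer) probability one; that case is inherited by every
smaller `γ`, so minimality of `γ = α` rules it out. Hence `β ⊆ α` or `αᶜ ⊆ β`, and symmetrically
`β ⊆ αᶜ` or `α ⊆ β`; as `β` is neither empty nor everything, `β = α` or `β = αᶜ`.
-/

theorem eq_one_of_negMulLog_add_negMulLog_eq {a b q : ℝ} (ha : 0 < a) (hb : 0 < b)
    (haq : a ≤ q) (hbq : b ≤ q) (hq : q ≤ 1) (hqab : q ≤ a + b)
    (h : negMulLog a + negMulLog b = negMulLog q) : a = 1 ∧ b = 1 := by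
  have hq0 : 0 < q := ha.trans_le haq
  have hlogq : log q ≤ 0 := log_nonpos hq0.le hq
  -- `0 = a log(q/a) + b log(q/b) + (a + b - q)(-log q)`, a sum of three nonnegative terms
  have hsum : a * (log q - log a) + b * (log q - log b) + (a + b - q) * -log q = 0 := by
    simp only [negMulLog] at h
    linarith
  have hta : 0 ≤ a * (log q - log a) :=
    mul_nonneg ha.le (sub_nonneg.2 (log_le_log ha haq))
  have htb : 0 ≤ b * (log q - log b) :=
    mul_nonneg hb.le (sub_nonneg.2 (log_le_log hb hbq))
  have htq : 0 ≤ (a + b - q) * -log q := mul_nonneg (by linarith) (by linarith)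
  have haq' : a = q := by
    refine haq.eq_of_not_lt fun hlt => ?_
    have := mul_pos ha (sub_pos.2 (log_lt_log ha hlt))
    linarith
  have hbq' : b = q := by
    refine hbq.eq_of_not_lt fun hlt => ?_
    have := mul_pos hb (sub_pos.2 (log_lt_log hb hlt))
    linarith
  have hq1 : q = 1 := by
    refine hq.eq_of_not_lt fun hlt => ?_
    have := mul_log_neg hq0 hlt
    rw [haq', hbq'] at h
    simp only [negMulLog] at h
    linarith
  exact ⟨haq'.trans hq1, hbq'.trans hq1⟩

theorem eq_or_eq_compl_of_le_or_le {B : Type*} [BooleanAlgebra B] {a b : B}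
    (hb : b ≠ ⊥) (hb' : b ≠ ⊤) (h : b ≤ a ∨ aᶜ ≤ b) (h' : b ≤ aᶜ ∨ a ≤ b) :
    b = a ∨ b = aᶜ := by
  rcases h with h | h <;> rcases h' with h' | h'
  · exact absurd (le_bot_iff.1 (inf_compl_eq_bot (a := a) ▸ le_inf h h')) hb
  · exact Or.inl (le_antisymm h h')
  · exact Or.inr (le_antisymm h' h)
  · exact absurd (top_le_iff.1 (sup_compl_eq_top (x := a) ▸ sup_le h' h)) hb'

section BoolCondEntropy

variable {Ω T : Type*} [MeasurableSpace Ω] (μ : Measure Ω) (A : Ω → Bool) (Y : Ω → T)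

theorem condEntropy_bool_eq_sum [Fintype T] :
    condEntropy μ A Y = ∑ y, (negMulLog (μ.real ((fun ω => (A ω, Y ω)) ⁻¹' {(true, y)}))
      + negMulLog (μ.real ((fun ω => (A ω, Y ω)) ⁻¹' {(false, y)}))
      - negMulLog (μ.real (Y ⁻¹' {y}))) := by
  rw [condEntropy, entropy, entropy, Fintype.sum_prod_type, Fintype.sum_bool,
    Finset.sum_sub_distrib, Finset.sum_add_distrib]
  rfl

theorem fiber_term_eq_zero_of_const {y : T} (c : Bool) (h : ∀ ω, Y ω = y → A ω = c) :
    negMulLog (μ.real ((fun ω => (A ω, Y ω)) ⁻¹' {(true, y)}))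
      + negMulLog (μ.real ((fun ω => (A ω, Y ω)) ⁻¹' {(false, y)}))
      - negMulLog (μ.real (Y ⁻¹' {y})) = 0 := by
  have hc : (fun ω => (A ω, Y ω)) ⁻¹' {(c, y)} = Y ⁻¹' {y} := by
    ext ω
    simp only [Set.mem_preimage, Set.mem_singleton_iff, Prod.ext_iff]
    exact ⟨And.right, fun hω => ⟨h ω hω, hω⟩⟩
  have hnc : (fun ω => (A ω, Y ω)) ⁻¹' {(!c, y)} = ∅ := by
    ext ω
    simp only [Set.mem_preimage, Set.mem_singleton_iff, Prod.ext_iff, Set.mem_empty_iff_false,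
      iff_false, not_and]
    intro hA hω
    simp [h ω hω] at hA
  cases c <;> simp_all

end BoolCondEntropy

def singletonIndicators {Ω S : Type*} [DecidableEq S] (X : Ω → S) (γ : Finset S) :
    Ω → (γ → Bool) :=
  fun ω x => part X {x.1} ω

section SingletonIndicators

variable {Ω S : Type*} [DecidableEq S] (X : Ω → S) (γ : Finset S)

theorem singletonIndicators_eq_false_iff [Fintype S] (ω : Ω) :
    singletonIndicators X γ ω = (fun _ => false) ↔ X ω ∈ γᶜ := by
  simp [singletonIndicators, part, funext_iff]

theorem eq_of_singletonIndicators_eq {y : γ → Bool} {x : γ} (hx : y x = true) {ω : Ω}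
    (hω : singletonIndicators X γ ω = y) : X ω = x := by
  simpa [singletonIndicators, part, ← hω] using hx

theorem condEntropy_part_singletonIndicators [MeasurableSpace Ω] (μ : Measure Ω) [Fintype S]
    (β : Finset S) :
    condEntropy μ (part X β) (singletonIndicators X γ) =
      negMulLog (μ.real (X ⁻¹' ↑(γᶜ ∩ β))) + negMulLog (μ.real (X ⁻¹' ↑(γᶜ ∩ βᶜ)))
        - negMulLog (μ.real (X ⁻¹' ↑γᶜ)) := by
  rw [condEntropy_bool_eq_sum, Fintype.sum_eq_single (fun _ => false)]
  · congr 3 <;> [congr 1; congr 1; skip] <;> ext ω <;>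
      simp [Prod.ext_iff, singletonIndicators_eq_false_iff, part, and_comm]
  · intro y hy
    obtain ⟨x, hx⟩ := Function.ne_iff.mp hy
    refine fiber_term_eq_zero_of_const μ _ _ (decide (x.1 ∈ β)) fun ω hω => ?_
    simp [part, eq_of_singletonIndicators_eq X γ (by simpa using hx) hω]

end SingletonIndicators

theorem measureReal_eq_one_of_subset {Ω : Type*} [MeasurableSpace Ω] (μ : Measure Ω)
    [IsProbabilityMeasure μ] {s t : Set Ω} (hs : μ.real s = 1) (hst : s ⊆ t) :
    μ.real t = 1 :=
  le_antisymm measureReal_le_one (hs ▸ measureReal_mono hst)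

theorem measureReal_preimage_pos {Ω S : Type*} [MeasurableSpace Ω] (μ : Measure Ω)
    [IsFiniteMeasure μ] (X : Ω → S) (hsupp : ∀ s : S, μ (X ⁻¹' {s}) ≠ 0) {D : Finset S}
    (hD : D.Nonempty) :
    0 < μ.real (X ⁻¹' ↑D) := by
  obtain ⟨s, hs⟩ := hD
  refine ENNReal.toReal_pos (fun h => hsupp s ?_) (measure_ne_top μ _)
  exact measure_mono_null (Set.preimage_mono (by simpa using hs)) h

theorem measureReal_preimage_le_inter_add_inter_compl {Ω S : Type*} [MeasurableSpace Ω]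
    (μ : Measure Ω) [IsFiniteMeasure μ] [Fintype S] [DecidableEq S] (X : Ω → S) (β D : Finset S) :
    μ.real (X ⁻¹' ↑D) ≤ μ.real (X ⁻¹' ↑(D ∩ β)) + μ.real (X ⁻¹' ↑(D ∩ βᶜ)) := by
  calc μ.real (X ⁻¹' ↑D) ≤ μ.real (X ⁻¹' ↑(D ∩ β) ∪ X ⁻¹' ↑(D ∩ βᶜ)) :=
        measureReal_mono fun ω hω => by by_cases X ω ∈ β <;> simp_all
    _ ≤ _ := measureReal_union_le _ _

section Determination

variable {Ω S : Type*} [MeasurableSpace Ω] (μ : Measure Ω) [IsProbabilityMeasure μ]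
  [Fintype S] [DecidableEq S] (X : Ω → S) (β : Finset S)

/-- The third alternative can occur because `X` need not be measurable: on non-measurable
preimages `μ` is only an outer measure. -/
theorem disjoint_or_of_condEntropy_part_singletonIndicators_eq_zero
    (hsupp : ∀ s : S, μ (X ⁻¹' {s}) ≠ 0) {γ : Finset S}
    (h : condEntropy μ (part X β) (singletonIndicators X γ) = 0) :
    Disjoint γᶜ β ∨ Disjoint γᶜ βᶜ ∨
      (μ.real (X ⁻¹' ↑(γᶜ ∩ β)) = 1 ∧ μ.real (X ⁻¹' ↑(γᶜ ∩ βᶜ)) = 1) := by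
  rw [condEntropy_part_singletonIndicators, sub_eq_zero] at h
  refine or_iff_not_imp_left.2 fun hβ => or_iff_not_imp_left.2 fun hβc => ?_
  rw [Finset.not_disjoint_iff_nonempty_inter] at hβ hβc
  exact eq_one_of_negMulLog_add_negMulLog_eq
    (measureReal_preimage_pos μ X hsupp hβ) (measureReal_preimage_pos μ X hsupp hβc)
    (measureReal_mono (by simp)) (measureReal_mono (by simp)) measureReal_le_one
    (measureReal_preimage_le_inter_add_inter_compl μ X β _) h

theorem condEntropy_part_singletonIndicators_eq_zero {γ : Finset S}
    (hβ : μ.real (X ⁻¹' ↑(γᶜ ∩ β)) = 1) (hβc : μ.real (X ⁻¹' ↑(γᶜ ∩ βᶜ)) = 1) :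
    condEntropy μ (part X β) (singletonIndicators X γ) = 0 := by
  have hγ : μ.real (X ⁻¹' ↑γᶜ) = 1 :=
    measureReal_eq_one_of_subset μ hβ (Set.preimage_mono (by simp))
  rw [condEntropy_part_singletonIndicators, hβ, hβc, hγ]
  simp

theorem subset_or_compl_subset_of_minimal (hsupp : ∀ s : S, μ (X ⁻¹' {s}) ≠ 0) {α : Finset S}
    (hα : α.Nonempty)
    (h : ∀ γ ⊆ α, condEntropy μ (part X β) (singletonIndicators X γ) = 0 ↔ γ = α) :
    β ⊆ α ∨ αᶜ ⊆ β := by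
  rcases disjoint_or_of_condEntropy_part_singletonIndicators_eq_zero μ X β hsupp
    ((h α subset_rfl).2 rfl) with hd | hd | ⟨hβ, hβc⟩
  · exact Or.inl (disjoint_compl_left_iff.1 hd)
  · exact Or.inr (disjoint_compl_right_iff.1 hd)
  · obtain ⟨s, hs⟩ := hα
    have hsub : ∀ t : Finset S, X ⁻¹' ↑(αᶜ ∩ t) ⊆ X ⁻¹' ↑((α.erase s)ᶜ ∩ t) := fun t =>
      Set.preimage_mono (by gcongr; exact Finset.erase_subset s α)
    have herase : α.erase s = α := (h _ (Finset.erase_subset s α)).1 <|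
      condEntropy_part_singletonIndicators_eq_zero μ X β
        (measureReal_eq_one_of_subset μ hβ (hsub β))
        (measureReal_eq_one_of_subset μ hβc (hsub βᶜ))
    exact absurd hs (Finset.erase_eq_self.1 herase)

end Determination

theorem stmt11_general {Ω : Type*} [MeasurableSpace Ω] (μ : Measure Ω) [IsProbabilityMeasure μ]
    {S : Type*} [Fintype S] [DecidableEq S]
    (X : Ω → S) (hsupp : ∀ s : S, μ (X ⁻¹' {s}) ≠ 0)
    (α β : Finset S)
    (hα : α.Nonempty) (hα' : α ≠ Finset.univ)
    (hβ : β.Nonempty) (hβ' : β ≠ Finset.univ)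
    (h1 : ∀ γ : Finset S, γ ⊆ α →
      (condEntropy μ (part X β) (fun ω => fun x : {x // x ∈ γ} => part X {x.1} ω) = 0 ↔
        γ = α))
    (h2 : ∀ γ : Finset S, γ ⊆ αᶜ →
      (condEntropy μ (part X β) (fun ω => fun x : {x // x ∈ γ} => part X {x.1} ω) = 0 ↔
        γ = αᶜ)) :
    β = α ∨ β = αᶜ := by
  have hαc : αᶜ.Nonempty :=
    Finset.nonempty_iff_ne_empty.2 (mt (Finset.compl_eq_empty_iff α).1 hα')
  have hA := subset_or_compl_subset_of_minimal μ X β hsupp hα h1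
  have hB := subset_or_compl_subset_of_minimal μ X β hsupp hαc h2
  rw [compl_compl] at hB
  exact eq_or_eq_compl_of_le_or_le hβ.ne_empty hβ' hA hB

/-- Proposition 2, vector case: if a binary partition variable `A_⟨β⟩`
is determined by the indicators `(A_⟨x⟩, x ∈ γ)` exactly when `γ = α` (among `γ ⊆ α`)
and exactly when `γ = αᶜ` (among `γ ⊆ αᶜ`), then `⟨β⟩ = ⟨α⟩`. -/
theorem stmt11 {Ω : Type*} [MeasurableSpace Ω] (μ : Measure Ω) [IsProbabilityMeasure μ]
    {S : Type*} [Fintype S] [DecidableEq S] (hS : 3 ≤ Fintype.card S)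
    (X : Ω → S) (hsupp : ∀ s : S, μ (X ⁻¹' {s}) ≠ 0)
    (α β : Finset S)
    (hα : α.Nonempty) (hα' : α ≠ Finset.univ)
    (hβ : β.Nonempty) (hβ' : β ≠ Finset.univ)
    (h1 : ∀ γ : Finset S, γ ⊆ α →
      (condEntropy μ (part X β) (fun ω => fun x : {x // x ∈ γ} => part X {x.1} ω) = 0 ↔
        γ = α))
    (h2 : ∀ γ : Finset S, γ ⊆ αᶜ →
      (condEntropy μ (part X β) (fun ω => fun x : {x // x ∈ γ} => part X {x.1} ω) = 0 ↔
        γ = αᶜ)) :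
    β = α ∨ β = αᶜ :=
  stmt11_general μ X hsupp α β hα hα' hβ hβ' h1 h2
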